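/- Let β be the tribonacci number. Then S_β(4) = [(0011)^∞]_β: no periodic binary sequence of smallest period 4 satisfies (0011)^∞ ≺ σ^n(x) ≺ (110)^∞ for all n ≥ 0, while (0011)^∞ satisfies (0011)^∞ ⪯ σ^n((0011)^∞) ≺ (110)^∞ for all n. -/

import Mathlib

open Function Filter

noncomputable section

/-- Left shift on sequences. -/
def shift (x : ℕ → ℕ) : ℕ → ℕ := fun i => x (i + 1)

/-- Strict lexicographic order on digit sequences. -/
def seqLt (x y : ℕ → ℕ) : Prop := ∃ n, (∀ i < n, x i = y i) ∧ x n < y n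

/-- Non-strict lexicographic order. -/
def seqLe (x y : ℕ → ℕ) : Prop := seqLt x y ∨ x = y

/-- The periodic sequence obtained by repeating the word `w`. -/
def wordSeq (w : List ℕ) : ℕ → ℕ := fun i => w.getD (i % w.length) 0

/-- The β-transformation x ↦ βx mod 1 on [0,1). -/
def Tmap (β : ℝ) : ℝ → ℝ := fun x => Int.fract (β * x)

/-- Survivor set of the open dynamical system with hole [0, t). -/
def K (β t : ℝ) : Set ℝ := {x | x ∈ Set.Ico (0:ℝ) 1 ∧ ∀ n : ℕ, t ≤ (Tmap β)^[n] x}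

/-- The critical value `S_β(p)`. -/
def S (β : ℝ) (p : ℕ) : ℝ :=
  sSup {t | t ∈ Set.Ico (0:ℝ) 1 ∧ ∃ x ∈ K β t, Function.minimalPeriod (Tmap β) x = p}

/-- Value of a digit sequence in base β. -/
def val (β : ℝ) (x : ℕ → ℕ) : ℝ := ∑' i, (x i : ℝ) / β ^ (i + 1)


lemma shift_iter (m : ℕ) (x : ℕ → ℕ) (i : ℕ) : (shift^[m] x) i = x (i + m) := by
  induction m generalizing x i with
  | zero => simp
  | succ m ih =>
    rw [Function.iterate_succ_apply, ih]
    simp [shift, Nat.add_assoc]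

lemma ws0011 (i : ℕ) : wordSeq [0,0,1,1] i = if i % 4 ≤ 1 then 0 else 1 := by
  have h : i % 4 = 0 ∨ i % 4 = 1 ∨ i % 4 = 2 ∨ i % 4 = 3 := by omega
  rcases h with h | h | h | h <;> simp [wordSeq, h]

lemma ws110 (i : ℕ) : wordSeq [1,1,0] i = if i % 3 ≤ 1 then 1 else 0 := by
  have h : i % 3 = 0 ∨ i % 3 = 1 ∨ i % 3 = 2 := by omega
  rcases h with h | h | h <;> simp [wordSeq, h]

lemma refuteLeft (x : ℕ → ℕ) (m : ℕ) (hx : ∀ i, x i ≤ 1)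
    (h : ∀ n, n % 4 ≤ 1 → x (n + m) = 0) :
    ¬ seqLt (wordSeq [0,0,1,1]) (shift^[m] x) := by
  rintro ⟨n, heq, hlt⟩
  rw [shift_iter, ws0011] at hlt
  by_cases hn : n % 4 ≤ 1
  · rw [h n hn] at hlt; simp [hn] at hlt
  · have := hx (n + m); simp [hn] at hlt; omega

lemma refuteRight (x : ℕ → ℕ) (m : ℕ)
    (h0 : x m = 1) (h1 : x (1 + m) = 1) (h2 : x (2 + m) = 1) :
    ¬ seqLt (shift^[m] x) (wordSeq [1,1,0]) := by
  rintro ⟨n, heq, hlt⟩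
  rw [shift_iter, ws110] at hlt
  rcases Nat.lt_or_ge n 3 with hn | hn
  · interval_cases n <;> simp_all <;> omega
  · have := heq 2 (by omega)
    rw [shift_iter, ws110] at this
    simp [h2] at this


lemma period2_contra (x : ℕ → ℕ) (hmod : ∀ i, x i = x (i % 4))
    (h02 : x 2 = x 0) (h13 : x 3 = x 1) (hmp : Function.minimalPeriod shift x = 4) : False := by
  have hpp : Function.IsPeriodicPt shift 2 x := by
    show shift^[2] x = x
    funext i
    rw [shift_iter, hmod (i+2), hmod i]
    have h2 : (i+2) % 4 = (i%4+2) % 4 := by omega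
    have h4 : i % 4 = 0 ∨ i % 4 = 1 ∨ i % 4 = 2 ∨ i % 4 = 3 := by omega
    rcases h4 with h | h | h | h <;> rw [h2, h] <;> norm_num [h02, h13]
  have := hpp.minimalPeriod_dvd
  rw [hmp] at this
  omega

lemma conj2 (x : ℕ → ℕ) (hx : ∀ i, x i ≤ 1) (hmp : Function.minimalPeriod shift x = 4) :
    ¬ (∀ n : ℕ, seqLt (wordSeq [0,0,1,1]) (shift^[n] x) ∧
        seqLt (shift^[n] x) (wordSeq [1,1,0])) := by
  intro H
  have hpp : shift^[4] x = x := by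
    rw [← hmp]; exact Function.isPeriodicPt_minimalPeriod shift x
  have hper : ∀ i, x (i + 4) = x i := by
    intro i
    conv_rhs => rw [← hpp]
    rw [shift_iter]
  have hmod : ∀ i, x i = x (i % 4) := by
    intro i
    have key : ∀ k r, x (4 * k + r) = x r := by
      intro k
      induction k with
      | zero => simp
      | succ k ih => intro r; have := hper (4 * k + r); rw [show 4*(k+1)+r = 4*k+r+4 by ring, this, ih]
    have h := key (i / 4) (i % 4)
    rw [Nat.div_add_mod] at h
    exact h
  obtain h0 | h0 := Nat.le_one_iff_eq_zero_or_eq_one.mp (hx 0) <;>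
    obtain h1 | h1 := Nat.le_one_iff_eq_zero_or_eq_one.mp (hx 1) <;>
      obtain h2 | h2 := Nat.le_one_iff_eq_zero_or_eq_one.mp (hx 2) <;>
        obtain h3 | h3 := Nat.le_one_iff_eq_zero_or_eq_one.mp (hx 3)
  · exact refuteLeft x 0 hx (fun n hn => by
      rw [hmod (n+0)]
      have h4 : (n+0)%4 = 0 ∨ (n+0)%4 = 1 := by omega
      rcases h4 with h | h <;> rw [h] <;> assumption) (H 0).1
  · exact refuteLeft x 0 hx (fun n hn => by
      rw [hmod (n+0)]
      have h4 : (n+0)%4 = 0 ∨ (n+0)%4 = 1 := by omega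
      rcases h4 with h | h <;> rw [h] <;> assumption) (H 0).1
  · exact refuteLeft x 0 hx (fun n hn => by
      rw [hmod (n+0)]
      have h4 : (n+0)%4 = 0 ∨ (n+0)%4 = 1 := by omega
      rcases h4 with h | h <;> rw [h] <;> assumption) (H 0).1
  · exact refuteLeft x 0 hx (fun n hn => by
      rw [hmod (n+0)]
      have h4 : (n+0)%4 = 0 ∨ (n+0)%4 = 1 := by omega
      rcases h4 with h | h <;> rw [h] <;> assumption) (H 0).1
  · exact refuteLeft x 2 hx (fun n hn => by
      rw [hmod (n+2)]
      have h4 : (n+2)%4 = 2 ∨ (n+2)%4 = 3 := by omega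
      rcases h4 with h | h <;> rw [h] <;> assumption) (H 2).1
  · exact period2_contra x hmod (by rw [h2, h0]) (by rw [h3, h1]) hmp
  · exact refuteLeft x 3 hx (fun n hn => by
      rw [hmod (n+3)]
      have h4 : (n+3)%4 = 3 ∨ (n+3)%4 = 0 := by omega
      rcases h4 with h | h <;> rw [h] <;> assumption) (H 3).1
  · exact refuteRight x 1 h1 h2 h3 (H 1).2
  · exact refuteLeft x 1 hx (fun n hn => by
      rw [hmod (n+1)]
      have h4 : (n+1)%4 = 1 ∨ (n+1)%4 = 2 := by omega
      rcases h4 with h | h <;> rw [h] <;> assumption) (H 1).1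
  · exact refuteLeft x 1 hx (fun n hn => by
      rw [hmod (n+1)]
      have h4 : (n+1)%4 = 1 ∨ (n+1)%4 = 2 := by omega
      rcases h4 with h | h <;> rw [h] <;> assumption) (H 1).1
  · exact period2_contra x hmod (by rw [h2, h0]) (by rw [h3, h1]) hmp
  · exact refuteRight x 2 h2 h3 (by have t := hmod 4; norm_num at t; rw [t]; exact h0) (H 2).2
  · exact refuteLeft x 2 hx (fun n hn => by
      rw [hmod (n+2)]
      have h4 : (n+2)%4 = 2 ∨ (n+2)%4 = 3 := by omega
      rcases h4 with h | h <;> rw [h] <;> assumption) (H 2).1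
  · exact refuteRight x 3 h3 (by have t := hmod 4; norm_num at t; rw [t]; exact h0) (by have t := hmod 5; norm_num at t; rw [t]; exact h1) (H 3).2
  · exact refuteRight x 0 h0 h1 h2 (H 0).2
  · exact refuteRight x 0 h0 h1 h2 (H 0).2

lemma conj3 (n : ℕ) : seqLe (wordSeq [0,0,1,1]) (shift^[n] (wordSeq [0,0,1,1])) ∧
    seqLt (shift^[n] (wordSeq [0,0,1,1])) (wordSeq [1,1,0]) := by
  have h4 : n % 4 = 0 ∨ n % 4 = 1 ∨ n % 4 = 2 ∨ n % 4 = 3 := by omega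
  constructor
  · rcases h4 with h | h | h | h
    · right
      funext i
      rw [shift_iter, ws0011, ws0011]
      have e : (i+n) % 4 = i % 4 := by omega
      rw [e]
    · refine Or.inl ⟨1, fun i hi => ?_, ?_⟩
      · interval_cases i
        rw [shift_iter, ws0011, ws0011]
        have e : (0+n) % 4 = 1 := by omega
        rw [e]; norm_num
      · rw [shift_iter, ws0011, ws0011]
        have e : (1+n) % 4 = 2 := by omega
        rw [e]; norm_num
    · refine Or.inl ⟨0, fun i hi => by omega, ?_⟩
      rw [shift_iter, ws0011, ws0011]
      have e : (0+n) % 4 = 2 := by omega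
      rw [e]; norm_num
    · refine Or.inl ⟨0, fun i hi => by omega, ?_⟩
      rw [shift_iter, ws0011, ws0011]
      have e : (0+n) % 4 = 3 := by omega
      rw [e]; norm_num
  · rcases h4 with h | h | h | h
    · refine ⟨0, fun i hi => by omega, ?_⟩
      rw [shift_iter, ws0011, ws110]
      have e : (0+n) % 4 = 0 := by omega
      rw [e]; norm_num
    · refine ⟨0, fun i hi => by omega, ?_⟩
      rw [shift_iter, ws0011, ws110]
      have e : (0+n) % 4 = 1 := by omega
      rw [e]; norm_num
    · refine ⟨3, fun i hi => ?_, ?_⟩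
      · interval_cases i <;> rw [shift_iter, ws0011, ws110]
        · have e : (0+n) % 4 = 2 := by omega
          rw [e]; norm_num
        · have e : (1+n) % 4 = 3 := by omega
          rw [e]; norm_num
        · have e : (2+n) % 4 = 0 := by omega
          rw [e]; norm_num
      · rw [shift_iter, ws0011, ws110]
        have e : (3+n) % 4 = 1 := by omega
        rw [e]; norm_num
    · refine ⟨1, fun i hi => ?_, ?_⟩
      · interval_cases i
        rw [shift_iter, ws0011, ws110]
        have e : (0+n) % 4 = 3 := by omega
        rw [e]; norm_num
      · rw [shift_iter, ws0011, ws110]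
        have e : (1+n) % 4 = 0 := by omega
        rw [e]; norm_num


lemma beta_lb (β : ℝ) (hβ1 : β^3 = β^2+β+1) (hβ2 : 1 < β) (hβ3 : β < 2) : 9/5 < β := by
  nlinarith [sq_nonneg (β-2), sq_nonneg (β-1), sq_nonneg β]

set_option maxHeartbeats 4000000 in
lemma key (β : ℝ) (hβ1 : β^3 = β^2+β+1) (hβ2 : 1 < β) (hβ3 : β < 2)
    (x0 : ℝ) (h00 : 0 ≤ x0) (h01 : x0 < 1)
    (hp : (Tmap β)^[4] x0 = x0) (hnp : (Tmap β)^[2] x0 ≠ x0) :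
    ∃ n : ℕ, (Tmap β)^[n] x0 ≤ 1/(2*β) := by
  have hb0 : (0:ℝ) < β := by linarith
  have h2b : β^4 = 2*β^2+2*β+1 := by linear_combination (β+1)*hβ1
  obtain ⟨x1, hx1⟩ : ∃ y, Tmap β x0 = y := ⟨_, rfl⟩
  obtain ⟨x2, hx2⟩ : ∃ y, Tmap β x1 = y := ⟨_, rfl⟩
  obtain ⟨x3, hx3⟩ : ∃ y, Tmap β x2 = y := ⟨_, rfl⟩
  have hit1 : (Tmap β)^[1] x0 = x1 := by rw [Function.iterate_one, hx1]
  have hit2 : (Tmap β)^[2] x0 = x2 := by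
    rw [show (2:ℕ) = 1+1 from rfl, Function.iterate_succ_apply', hit1, hx2]
  have hit3 : (Tmap β)^[3] x0 = x3 := by
    rw [show (3:ℕ) = 2+1 from rfl, Function.iterate_succ_apply', hit2, hx3]
  have h4 : Tmap β x3 = x0 := by
    have := Function.iterate_succ_apply' (Tmap β) 3 x0
    rw [hit3] at this
    rw [← this]
    exact hp
  have h10 : 0 ≤ x1 := by rw [← hx1]; exact Int.fract_nonneg _
  have h11 : x1 < 1 := by rw [← hx1]; exact Int.fract_lt_one _
  have h20 : 0 ≤ x2 := by rw [← hx2]; exact Int.fract_nonneg _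
  have h21 : x2 < 1 := by rw [← hx2]; exact Int.fract_lt_one _
  have h30 : 0 ≤ x3 := by rw [← hx3]; exact Int.fract_nonneg _
  have h31 : x3 < 1 := by rw [← hx3]; exact Int.fract_lt_one _
  have E0 : x1 = β*x0 - (⌊β*x0⌋:ℝ) := by rw [← hx1]; exact (Int.self_sub_floor _).symm
  have E1 : x2 = β*x1 - (⌊β*x1⌋:ℝ) := by rw [← hx2]; exact (Int.self_sub_floor _).symm
  have E2 : x3 = β*x2 - (⌊β*x2⌋:ℝ) := by rw [← hx3]; exact (Int.self_sub_floor _).symm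
  have E3 : x0 = β*x3 - (⌊β*x3⌋:ℝ) := by rw [← h4]; exact (Int.self_sub_floor _).symm
  have d0 : ⌊β*x0⌋ = 0 ∨ ⌊β*x0⌋ = 1 := by
    have l1 : (0:ℤ) ≤ ⌊β*x0⌋ := Int.floor_nonneg.mpr (by positivity)
    have l2 : ⌊β*x0⌋ < 2 := Int.floor_lt.mpr (by push_cast; nlinarith)
    omega
  have d1 : ⌊β*x1⌋ = 0 ∨ ⌊β*x1⌋ = 1 := by
    have l1 : (0:ℤ) ≤ ⌊β*x1⌋ := Int.floor_nonneg.mpr (by positivity)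
    have l2 : ⌊β*x1⌋ < 2 := Int.floor_lt.mpr (by push_cast; nlinarith)
    omega
  have d2 : ⌊β*x2⌋ = 0 ∨ ⌊β*x2⌋ = 1 := by
    have l1 : (0:ℤ) ≤ ⌊β*x2⌋ := Int.floor_nonneg.mpr (by positivity)
    have l2 : ⌊β*x2⌋ < 2 := Int.floor_lt.mpr (by push_cast; nlinarith)
    omega
  have d3 : ⌊β*x3⌋ = 0 ∨ ⌊β*x3⌋ = 1 := by
    have l1 : (0:ℤ) ≤ ⌊β*x3⌋ := Int.floor_nonneg.mpr (by positivity)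
    have l2 : ⌊β*x3⌋ < 2 := Int.floor_lt.mpr (by push_cast; nlinarith)
    omega
  have lo0 : (⌊β*x0⌋:ℝ) ≤ β*x0 := Int.floor_le _
  have hi0 : β*x0 < (⌊β*x0⌋:ℝ)+1 := Int.lt_floor_add_one _
  have lo1 : (⌊β*x1⌋:ℝ) ≤ β*x1 := Int.floor_le _
  have hi1 : β*x1 < (⌊β*x1⌋:ℝ)+1 := Int.lt_floor_add_one _
  have lo2 : (⌊β*x2⌋:ℝ) ≤ β*x2 := Int.floor_le _
  have hi2 : β*x2 < (⌊β*x2⌋:ℝ)+1 := Int.lt_floor_add_one _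
  have lo3 : (⌊β*x3⌋:ℝ) ≤ β*x3 := Int.floor_le _
  have hi3 : β*x3 < (⌊β*x3⌋:ℝ)+1 := Int.lt_floor_add_one _
  have hpos : (0:ℝ) < β^4 - 1 := by nlinarith
  rcases d0 with d0 | d0 <;> rcases d1 with d1 | d1 <;> rcases d2 with d2 | d2 <;> rcases d3 with d3 | d3
  · rw [d0] at E0 lo0 hi0
    rw [d1] at E1 lo1 hi1
    rw [d2] at E2 lo2 hi2
    rw [d3] at E3 lo3 hi3
    push_cast at E0 E1 E2 E3 lo0 lo1 lo2 lo3 hi0 hi1 hi2 hi3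
    refine ⟨0, ?_⟩
    rw [Function.iterate_zero_apply]
    have hval : x0*(β^4-1) = (0)*β^3 + (0)*β^2 + (0)*β + (0) := by linear_combination (-(β^3))*E0 + (-(β^2))*E1 + (-β)*E2 + (-1)*E3
    rw [le_div_iff₀ (by positivity : (0:ℝ) < 2*β)]
    nlinarith [hval, h2b, hβ2, hpos]
  · rw [d0] at E0 lo0 hi0
    rw [d1] at E1 lo1 hi1
    rw [d2] at E2 lo2 hi2
    rw [d3] at E3 lo3 hi3
    push_cast at E0 E1 E2 E3 lo0 lo1 lo2 lo3 hi0 hi1 hi2 hi3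
    refine ⟨0, ?_⟩
    rw [Function.iterate_zero_apply]
    have hval : x0*(β^4-1) = (0)*β^3 + (0)*β^2 + (0)*β + (1) := by linear_combination (-(β^3))*E0 + (-(β^2))*E1 + (-β)*E2 + (-1)*E3
    rw [le_div_iff₀ (by positivity : (0:ℝ) < 2*β)]
    nlinarith [hval, h2b, hβ2, hpos]
  · rw [d0] at E0 lo0 hi0
    rw [d1] at E1 lo1 hi1
    rw [d2] at E2 lo2 hi2
    rw [d3] at E3 lo3 hi3
    push_cast at E0 E1 E2 E3 lo0 lo1 lo2 lo3 hi0 hi1 hi2 hi3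
    refine ⟨0, ?_⟩
    rw [Function.iterate_zero_apply]
    have hval : x0*(β^4-1) = (0)*β^3 + (0)*β^2 + (1)*β + (0) := by linear_combination (-(β^3))*E0 + (-(β^2))*E1 + (-β)*E2 + (-1)*E3
    rw [le_div_iff₀ (by positivity : (0:ℝ) < 2*β)]
    nlinarith [hval, h2b, hβ2, hpos]
  · rw [d0] at E0 lo0 hi0
    rw [d1] at E1 lo1 hi1
    rw [d2] at E2 lo2 hi2
    rw [d3] at E3 lo3 hi3
    push_cast at E0 E1 E2 E3 lo0 lo1 lo2 lo3 hi0 hi1 hi2 hi3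
    refine ⟨0, ?_⟩
    rw [Function.iterate_zero_apply]
    have hval : x0*(β^4-1) = (0)*β^3 + (0)*β^2 + (1)*β + (1) := by linear_combination (-(β^3))*E0 + (-(β^2))*E1 + (-β)*E2 + (-1)*E3
    rw [le_div_iff₀ (by positivity : (0:ℝ) < 2*β)]
    nlinarith [hval, h2b, hβ2, hpos]
  · rw [d0] at E0 lo0 hi0
    rw [d1] at E1 lo1 hi1
    rw [d2] at E2 lo2 hi2
    rw [d3] at E3 lo3 hi3
    push_cast at E0 E1 E2 E3 lo0 lo1 lo2 lo3 hi0 hi1 hi2 hi3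
    refine ⟨2, ?_⟩
    rw [hit2]
    have hval : x2*(β^4-1) = (0)*β^3 + (0)*β^2 + (0)*β + (1) := by linear_combination (-(β^3))*E2 + (-(β^2))*E3 + (-β)*E0 + (-1)*E1
    rw [le_div_iff₀ (by positivity : (0:ℝ) < 2*β)]
    nlinarith [hval, h2b, hβ2, hpos]
  · rw [d0] at E0 lo0 hi0
    rw [d1] at E1 lo1 hi1
    rw [d2] at E2 lo2 hi2
    rw [d3] at E3 lo3 hi3
    push_cast at E0 E1 E2 E3 lo0 lo1 lo2 lo3 hi0 hi1 hi2 hi3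
    exfalso
    have hval0 : x0*(β^4-1) = (0)*β^3 + (1)*β^2 + (0)*β + (1) := by linear_combination (-(β^3))*E0 + (-(β^2))*E1 + (-β)*E2 + (-1)*E3
    have hval2 : x2*(β^4-1) = (0)*β^3 + (1)*β^2 + (0)*β + (1) := by linear_combination (-(β^3))*E2 + (-(β^2))*E3 + (-β)*E0 + (-1)*E1
    have hz : (x2 - x0)*(β^4-1) = 0 := by linear_combination hval2 - hval0
    rcases mul_eq_zero.mp hz with h | h
    · exact hnp (by rw [hit2]; linarith)
    · linarith
  · rw [d0] at E0 lo0 hi0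
    rw [d1] at E1 lo1 hi1
    rw [d2] at E2 lo2 hi2
    rw [d3] at E3 lo3 hi3
    push_cast at E0 E1 E2 E3 lo0 lo1 lo2 lo3 hi0 hi1 hi2 hi3
    refine ⟨3, ?_⟩
    rw [hit3]
    have hval : x3*(β^4-1) = (0)*β^3 + (0)*β^2 + (1)*β + (1) := by linear_combination (-(β^3))*E3 + (-(β^2))*E0 + (-β)*E1 + (-1)*E2
    rw [le_div_iff₀ (by positivity : (0:ℝ) < 2*β)]
    nlinarith [hval, h2b, hβ2, hpos]
  · rw [d0] at E0 lo0 hi0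
    rw [d1] at E1 lo1 hi1
    rw [d2] at E2 lo2 hi2
    rw [d3] at E3 lo3 hi3
    push_cast at E0 E1 E2 E3 lo0 lo1 lo2 lo3 hi0 hi1 hi2 hi3
    exfalso
    have hval : x0*(β^4-1) = (0)*β^3 + (1)*β^2 + (1)*β + (1) := by linear_combination (-(β^3))*E0 + (-(β^2))*E1 + (-β)*E2 + (-1)*E3
    have hv2 : β*x0*(β^4-1) = β^3+β^2+β := by linear_combination β*hval + (0)*β^3 + (1)*β^2 + (1)*β + (1)*(1:ℝ)*0
    nlinarith [hv2, hi0, hpos, hβ1, h2b, hβ2]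
  · rw [d0] at E0 lo0 hi0
    rw [d1] at E1 lo1 hi1
    rw [d2] at E2 lo2 hi2
    rw [d3] at E3 lo3 hi3
    push_cast at E0 E1 E2 E3 lo0 lo1 lo2 lo3 hi0 hi1 hi2 hi3
    refine ⟨1, ?_⟩
    rw [hit1]
    have hval : x1*(β^4-1) = (0)*β^3 + (0)*β^2 + (0)*β + (1) := by linear_combination (-(β^3))*E1 + (-(β^2))*E2 + (-β)*E3 + (-1)*E0
    rw [le_div_iff₀ (by positivity : (0:ℝ) < 2*β)]
    nlinarith [hval, h2b, hβ2, hpos]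
  · rw [d0] at E0 lo0 hi0
    rw [d1] at E1 lo1 hi1
    rw [d2] at E2 lo2 hi2
    rw [d3] at E3 lo3 hi3
    push_cast at E0 E1 E2 E3 lo0 lo1 lo2 lo3 hi0 hi1 hi2 hi3
    refine ⟨1, ?_⟩
    rw [hit1]
    have hval : x1*(β^4-1) = (0)*β^3 + (0)*β^2 + (1)*β + (1) := by linear_combination (-(β^3))*E1 + (-(β^2))*E2 + (-β)*E3 + (-1)*E0
    rw [le_div_iff₀ (by positivity : (0:ℝ) < 2*β)]
    nlinarith [hval, h2b, hβ2, hpos]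
  · rw [d0] at E0 lo0 hi0
    rw [d1] at E1 lo1 hi1
    rw [d2] at E2 lo2 hi2
    rw [d3] at E3 lo3 hi3
    push_cast at E0 E1 E2 E3 lo0 lo1 lo2 lo3 hi0 hi1 hi2 hi3
    exfalso
    have hval0 : x0*(β^4-1) = (1)*β^3 + (0)*β^2 + (1)*β + (0) := by linear_combination (-(β^3))*E0 + (-(β^2))*E1 + (-β)*E2 + (-1)*E3
    have hval2 : x2*(β^4-1) = (1)*β^3 + (0)*β^2 + (1)*β + (0) := by linear_combination (-(β^3))*E2 + (-(β^2))*E3 + (-β)*E0 + (-1)*E1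
    have hz : (x2 - x0)*(β^4-1) = 0 := by linear_combination hval2 - hval0
    rcases mul_eq_zero.mp hz with h | h
    · exact hnp (by rw [hit2]; linarith)
    · linarith
  · rw [d0] at E0 lo0 hi0
    rw [d1] at E1 lo1 hi1
    rw [d2] at E2 lo2 hi2
    rw [d3] at E3 lo3 hi3
    push_cast at E0 E1 E2 E3 lo0 lo1 lo2 lo3 hi0 hi1 hi2 hi3
    exfalso
    have hval : x1*(β^4-1) = (0)*β^3 + (1)*β^2 + (1)*β + (1) := by linear_combination (-(β^3))*E1 + (-(β^2))*E2 + (-β)*E3 + (-1)*E0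
    have hv2 : β*x1*(β^4-1) = β^3+β^2+β := by linear_combination β*hval + (0)*β^3 + (1)*β^2 + (1)*β + (1)*(1:ℝ)*0
    nlinarith [hv2, hi1, hpos, hβ1, h2b, hβ2]
  · rw [d0] at E0 lo0 hi0
    rw [d1] at E1 lo1 hi1
    rw [d2] at E2 lo2 hi2
    rw [d3] at E3 lo3 hi3
    push_cast at E0 E1 E2 E3 lo0 lo1 lo2 lo3 hi0 hi1 hi2 hi3
    refine ⟨2, ?_⟩
    rw [hit2]
    have hval : x2*(β^4-1) = (0)*β^3 + (0)*β^2 + (1)*β + (1) := by linear_combination (-(β^3))*E2 + (-(β^2))*E3 + (-β)*E0 + (-1)*E1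
    rw [le_div_iff₀ (by positivity : (0:ℝ) < 2*β)]
    nlinarith [hval, h2b, hβ2, hpos]
  · rw [d0] at E0 lo0 hi0
    rw [d1] at E1 lo1 hi1
    rw [d2] at E2 lo2 hi2
    rw [d3] at E3 lo3 hi3
    push_cast at E0 E1 E2 E3 lo0 lo1 lo2 lo3 hi0 hi1 hi2 hi3
    exfalso
    have hval : x2*(β^4-1) = (0)*β^3 + (1)*β^2 + (1)*β + (1) := by linear_combination (-(β^3))*E2 + (-(β^2))*E3 + (-β)*E0 + (-1)*E1
    have hv2 : β*x2*(β^4-1) = β^3+β^2+β := by linear_combination β*hval + (0)*β^3 + (1)*β^2 + (1)*β + (1)*(1:ℝ)*0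
    nlinarith [hv2, hi2, hpos, hβ1, h2b, hβ2]
  · rw [d0] at E0 lo0 hi0
    rw [d1] at E1 lo1 hi1
    rw [d2] at E2 lo2 hi2
    rw [d3] at E3 lo3 hi3
    push_cast at E0 E1 E2 E3 lo0 lo1 lo2 lo3 hi0 hi1 hi2 hi3
    exfalso
    have hval : x3*(β^4-1) = (0)*β^3 + (1)*β^2 + (1)*β + (1) := by linear_combination (-(β^3))*E3 + (-(β^2))*E0 + (-β)*E1 + (-1)*E2
    have hv2 : β*x3*(β^4-1) = β^3+β^2+β := by linear_combination β*hval + (0)*β^3 + (1)*β^2 + (1)*β + (1)*(1:ℝ)*0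
    nlinarith [hv2, hi3, hpos, hβ1, h2b, hβ2]
  · rw [d0] at E0 lo0 hi0
    rw [d1] at E1 lo1 hi1
    rw [d2] at E2 lo2 hi2
    rw [d3] at E3 lo3 hi3
    push_cast at E0 E1 E2 E3 lo0 lo1 lo2 lo3 hi0 hi1 hi2 hi3
    exfalso
    have hval : x0*(β^4-1) = (1)*β^3 + (1)*β^2 + (1)*β + (1) := by linear_combination (-(β^3))*E0 + (-(β^2))*E1 + (-β)*E2 + (-1)*E3
    nlinarith [hval, h01, hpos, hβ1, h2b]


lemma val_eq (β : ℝ) (hβ1 : β^3 = β^2+β+1) (hβ2 : 1 < β) :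
    val β (wordSeq [0,0,1,1]) = 1/(2*β) := by
  have hb0 : (0:ℝ) < β := by linarith
  have h2b : β^4 = 2*β^2+2*β+1 := by linear_combination (β+1)*hβ1
  set f : ℕ → ℝ := fun i => ((wordSeq [0,0,1,1] i : ℕ) : ℝ) / β ^ (i + 1) with hf
  have hgeo : Summable (fun i : ℕ => (1/β) * (1/β)^i) :=
    (summable_geometric_of_lt_one (by positivity) (by rw [div_lt_one hb0]; exact hβ2)).mul_left _
  have hsum : Summable f := by
    refine Summable.of_nonneg_of_le (fun i => by positivity) (fun i => ?_) hgeo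
    have h1 : ((wordSeq [0,0,1,1] i : ℕ) : ℝ) ≤ 1 := by
      rw [ws0011]; split <;> norm_num
    have h2 : (0:ℝ) < β ^ (i+1) := by positivity
    have h3 : (1/β) * (1/β)^i = 1/β^(i+1) := by
      rw [div_pow, one_pow, pow_succ]
      field_simp
    show ((wordSeq [0,0,1,1] i : ℕ) : ℝ) / β ^ (i + 1) ≤ 1/β * (1/β)^i
    rw [h3]
    exact (div_le_div_iff_of_pos_right h2).mpr h1
  have hrec : ∀ i, f (i+4) = (1/β^4) * f i := by
    intro i
    rw [hf]
    simp only
    rw [ws0011, ws0011]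
    have : (i+4) % 4 = i % 4 := by omega
    rw [this]
    have h2 : (0:ℝ) < β ^ (i+1) := by positivity
    field_simp
    ring
  have hsplit : (∑ i ∈ Finset.range 4, f i) + (∑' i, f (i + 4)) = ∑' i, f i :=
    Summable.sum_add_tsum_nat_add 4 hsum
  have htail : (∑' i, f (i + 4)) = (1/β^4) * ∑' i, f i := by
    rw [← tsum_mul_left]
    exact tsum_congr hrec
  have hfirst : (∑ i ∈ Finset.range 4, f i) = 1/β^3 + 1/β^4 := by
    rw [Finset.sum_range_succ, Finset.sum_range_succ, Finset.sum_range_succ,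
      Finset.sum_range_one]
    rw [hf]
    simp only
    rw [ws0011, ws0011, ws0011, ws0011]
    norm_num
  have hV : val β (wordSeq [0,0,1,1]) = ∑' i, f i := rfl
  rw [hV]
  set V := ∑' i, f i
  rw [htail, hfirst] at hsplit
  have hb7 : (β^7:ℝ) ≠ 0 := by positivity
  have hVeq2 : (V * (β^4-1)) * β^7 = (β+1) * β^7 := by
    field_simp at hsplit
    linear_combination (-β^7)*hsplit
  have hVeq : V * (β^4-1) = β+1 := mul_right_cancel₀ hb7 hVeq2
  have hb1 : (β+1:ℝ) ≠ 0 := by positivity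
  have hfin : (V * (2*β)) * (β+1) = 1 * (β+1) := by
    linear_combination hVeq - V*h2b
  have := mul_right_cancel₀ hb1 hfin
  rw [eq_div_iff (by positivity : (2*β:ℝ) ≠ 0)]
  linarith [this]

lemma Tc1 (β : ℝ) (hβ1 : β^3 = β^2+β+1) (hβ2 : 1 < β) (hβ3 : β < 2) :
    Tmap β (1/(2*β)) = 1/2 := by
  have hb0 : (0:ℝ) < β := by linarith
  have h : β * (1/(2*β)) = 1/2 := by field_simp
  rw [Tmap, h, Int.fract_eq_self.mpr ⟨by norm_num, by norm_num⟩]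

lemma Tc2 (β : ℝ) (hβ1 : β^3 = β^2+β+1) (hβ2 : 1 < β) (hβ3 : β < 2) :
    Tmap β (1/2) = β/2 := by
  have h : β * (1/2) = β/2 := by ring
  rw [Tmap, h, Int.fract_eq_self.mpr ⟨by linarith, by linarith⟩]

lemma Tc3 (β : ℝ) (hβ1 : β^3 = β^2+β+1) (hβ2 : 1 < β) (hβ3 : β < 2) :
    Tmap β (β/2) = β^2/2 - 1 := by
  have hlb : 9/5 < β := by nlinarith [sq_nonneg (β-2), sq_nonneg (β-1), sq_nonneg β]
  have h : β * (β/2) = β^2/2 := by ring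
  rw [Tmap, h]
  have hfl : ⌊(β^2/2 : ℝ)⌋ = 1 := by
    apply Int.floor_eq_iff.mpr
    constructor
    · push_cast; nlinarith
    · push_cast; nlinarith
  rw [Int.fract, hfl]
  norm_num

lemma Tc4 (β : ℝ) (hβ1 : β^3 = β^2+β+1) (hβ2 : 1 < β) (hβ3 : β < 2) :
    Tmap β (β^2/2 - 1) = 1/(2*β) := by
  have hb0 : (0:ℝ) < β := by linarith
  have hlb : 9/5 < β := by nlinarith [sq_nonneg (β-2), sq_nonneg (β-1), sq_nonneg β]
  have h : β * (β^2/2 - 1) = (β^2-β+1)/2 := by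
    field_simp
    linear_combination hβ1
  rw [Tmap, h]
  have hfl : ⌊((β^2-β+1)/2 : ℝ)⌋ = 1 := by
    apply Int.floor_eq_iff.mpr
    constructor
    · push_cast; nlinarith
    · push_cast; nlinarith
  rw [Int.fract, hfl]
  push_cast
  field_simp
  linear_combination hβ1

lemma orbit_mem (β : ℝ) (hβ1 : β^3 = β^2+β+1) (hβ2 : 1 < β) (hβ3 : β < 2) (n : ℕ) :
    (Tmap β)^[n] (1/(2*β)) ∈ ({1/(2*β), 1/2, β/2, β^2/2-1} : Set ℝ) := by
  induction n with
  | zero => left; rfl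
  | succ n ih =>
    rw [Function.iterate_succ_apply']
    rcases ih with h | h | h | h <;> rw [h]
    · rw [Tc1 β hβ1 hβ2 hβ3]; right; left; rfl
    · rw [Tc2 β hβ1 hβ2 hβ3]; right; right; left; rfl
    · rw [Tc3 β hβ1 hβ2 hβ3]; right; right; right; rfl
    · rw [Tc4 β hβ1 hβ2 hβ3]; left; rfl

lemma orbit_ge (β : ℝ) (hβ1 : β^3 = β^2+β+1) (hβ2 : 1 < β) (hβ3 : β < 2) (n : ℕ) :
    1/(2*β) ≤ (Tmap β)^[n] (1/(2*β)) := by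
  have hb0 : (0:ℝ) < β := by linarith
  have hlb : 9/5 < β := by nlinarith [sq_nonneg (β-2), sq_nonneg (β-1), sq_nonneg β]
  have h1 : 1/(2*β) < 1/2 := by rw [div_lt_div_iff₀ (by linarith) (by norm_num)]; linarith
  rcases orbit_mem β hβ1 hβ2 hβ3 n with h | h | h | h <;> rw [h]
  · linarith
  · rw [div_le_div_iff₀ (by linarith : (0:ℝ) < 2*β) (by norm_num : (0:ℝ) < 2)]
    nlinarith
  · rw [div_le_iff₀ (by linarith : (0:ℝ) < 2*β)]
    nlinarith

lemma minper (β : ℝ) (hβ1 : β^3 = β^2+β+1) (hβ2 : 1 < β) (hβ3 : β < 2) :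
    Function.minimalPeriod (Tmap β) (1/(2*β)) = 4 := by
  have hb0 : (0:ℝ) < β := by linarith
  have hlb : 9/5 < β := by nlinarith [sq_nonneg (β-2), sq_nonneg (β-1), sq_nonneg β]
  have hit1 : (Tmap β)^[1] (1/(2*β)) = 1/2 := by
    rw [Function.iterate_one, Tc1 β hβ1 hβ2 hβ3]
  have hit2 : (Tmap β)^[2] (1/(2*β)) = β/2 := by
    rw [show (2:ℕ) = 1+1 from rfl, Function.iterate_succ_apply', hit1, Tc2 β hβ1 hβ2 hβ3]
  have hit3 : (Tmap β)^[3] (1/(2*β)) = β^2/2-1 := by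
    rw [show (3:ℕ) = 2+1 from rfl, Function.iterate_succ_apply', hit2, Tc3 β hβ1 hβ2 hβ3]
  have hit4 : (Tmap β)^[4] (1/(2*β)) = 1/(2*β) := by
    rw [show (4:ℕ) = 3+1 from rfl, Function.iterate_succ_apply', hit3, Tc4 β hβ1 hβ2 hβ3]
  have hip : Function.IsPeriodicPt (Tmap β) 4 (1/(2*β)) := hit4
  have hdvd := hip.minimalPeriod_dvd
  have hpos := hip.minimalPeriod_pos (by norm_num)
  have hle : Function.minimalPeriod (Tmap β) (1/(2*β)) ≤ 4 := Nat.le_of_dvd (by norm_num) hdvd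
  interval_cases h : Function.minimalPeriod (Tmap β) (1/(2*β))
  · exfalso
    have := Function.isPeriodicPt_minimalPeriod (Tmap β) (1/(2*β))
    rw [h] at this
    have h1 : (Tmap β)^[1] (1/(2*β)) = 1/(2*β) := this
    rw [hit1] at h1
    rw [div_eq_div_iff (by norm_num) (by linarith)] at h1
    linarith
  · exfalso
    have := Function.isPeriodicPt_minimalPeriod (Tmap β) (1/(2*β))
    rw [h] at this
    have h1 : (Tmap β)^[2] (1/(2*β)) = 1/(2*β) := this
    rw [hit2] at h1
    rw [div_eq_div_iff (by norm_num) (by linarith)] at h1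
    nlinarith
  · exfalso
    omega
  · rfl

lemma conj1 (β : ℝ) (hβ1 : β^3 = β^2+β+1) (hβ2 : 1 < β) (hβ3 : β < 2) :
    S β 4 = val β (wordSeq [0,0,1,1]) := by
  have hb0 : (0:ℝ) < β := by linarith
  have hc1 : 1/(2*β) < 1 := by rw [div_lt_one (by linarith)]; linarith
  have hA : {t | t ∈ Set.Ico (0:ℝ) 1 ∧ ∃ x ∈ K β t, Function.minimalPeriod (Tmap β) x = 4}
      = Set.Icc 0 (1/(2*β)) := by
    ext t
    constructor
    · rintro ⟨⟨ht0, ht1⟩, x, ⟨⟨hx0, hx1⟩, hK⟩, hmp⟩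
      refine ⟨ht0, ?_⟩
      have hp : (Tmap β)^[4] x = x := by
        rw [← hmp]; exact Function.isPeriodicPt_minimalPeriod _ _
      have hnp : (Tmap β)^[2] x ≠ x := by
        intro h
        have hd := (show Function.IsPeriodicPt (Tmap β) 2 x from h).minimalPeriod_dvd
        rw [hmp] at hd
        omega
      obtain ⟨n, hn⟩ := key β hβ1 hβ2 hβ3 x hx0 hx1 hp hnp
      exact le_trans (hK n) hn
    · rintro ⟨ht0, ht1⟩
      exact ⟨⟨ht0, lt_of_le_of_lt ht1 hc1⟩, 1/(2*β),
        ⟨⟨by positivity, hc1⟩, fun n => le_trans ht1 (orbit_ge β hβ1 hβ2 hβ3 n)⟩,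
        minper β hβ1 hβ2 hβ3⟩
  rw [S, hA, csSup_Icc (by positivity), val_eq β hβ1 hβ2]

theorem stmt12 (β : ℝ) (hβ1 : β ^ 3 = β ^ 2 + β + 1) (hβ2 : 1 < β) (hβ3 : β < 2) :
    S β 4 = val β (wordSeq [0,0,1,1]) ∧
    (∀ x : ℕ → ℕ, (∀ i, x i ≤ 1) → Function.minimalPeriod shift x = 4 →
      ¬ (∀ n : ℕ, seqLt (wordSeq [0,0,1,1]) (shift^[n] x) ∧
        seqLt (shift^[n] x) (wordSeq [1,1,0]))) ∧
    (∀ n : ℕ, seqLe (wordSeq [0,0,1,1]) (shift^[n] (wordSeq [0,0,1,1])) ∧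
      seqLt (shift^[n] (wordSeq [0,0,1,1])) (wordSeq [1,1,0])) :=
  ⟨conj1 β hβ1 hβ2 hβ3, fun x hx hmp => conj2 x hx hmp, conj3⟩
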